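/- arXiv:1905.07196 — 6 statements merged into one kernel-verified Lean document; each statement's English description precedes it below -/
import Mathlib

section
/- Let 𝕂 be an algebraically closed field whose characteristic is 0 or coprime with k, and let A ∈ SL₂(𝕂). Then Φ_k(tr(A)) = 0 if and only if A^k = Id and A ≠ ±Id. -/
/-!
Over an algebraically closed field, `A` has an eigenvalue `λ ≠ 0`; then `tr A = λ + λ⁻¹` and
`(A - λ)(A - λ⁻¹) = 0`. The defining identity `Φ(λ + λ⁻¹)(λ^e - 1) = (λ^k - 1) λ^z` (with
`e = 1` or `2` according to the parity of `k`) shows directly that `Φ(λ + λ⁻¹) = 0` iff `λ^k = 1`,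
as long as `λ^e ≠ 1`. At the excluded points the identity, read in the Laurent polynomial ring,
can be divided by `T^e - 1` and gives `Φ(λ + λ⁻¹) = (k / e) λ^z ≠ 0`. So `Φ(tr A) = 0` iff `λ^k = 1`
and `λ ≠ ±1`. If `λ ≠ ±1` and `λ^k = 1`, then `(X - λ)(X - λ⁻¹)` divides `X^k - 1`, so `A^k = 1`;
conversely, if `A^k = 1` and `λ = ±1`, the minimal polynomial of `A` divides both `(X - λ)^2` and
the separable `X^k - 1`, which forces `A = λ`.
-/

open Polynomial

namespace LaurentPolynomial

variable {K : Type*} [Field K]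

theorem eq_zero_of_eval₂_eq_zero [Infinite K] {f : K[T;T⁻¹]}
    (hf : ∀ u : Kˣ, eval₂ (RingHom.id K) u f = 0) : f = 0 := by
  obtain ⟨n, p, hp⟩ := f.exists_T_pow
  have hp0 : p = 0 := by
    refine p.eq_zero_of_infinite_isRoot <|
      (Set.finite_singleton 0).infinite_compl.mono fun x (hx : x ≠ 0) => ?_
    have hpx := congrArg (eval₂ (RingHom.id K) (Units.mk0 x hx)) hp
    rwa [eval₂_toLaurent, map_mul, hf, zero_mul, Units.val_mk0] at hpx
  simpa [hp0, (isUnit_T (n : ℤ)).mul_left_eq_zero] using hp.symm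

theorem eval₂_aeval (Φ : ℤ[X]) (u : Kˣ) (f : K[T;T⁻¹]) :
    eval₂ (RingHom.id K) u (aeval f Φ) = aeval (eval₂ (RingHom.id K) u f) Φ :=
  (aeval_algHom_apply (eval₂ (RingHom.id K) u).toIntAlgHom f Φ).symm

theorem T_ne_one {n : ℤ} (hn : n ≠ 0) : (T n : K[T;T⁻¹]) ≠ 1 := by
  rw [← T_zero]
  intro h
  have := congrArg degree h
  rw [degree_T, degree_T] at this
  exact hn (by exact_mod_cast this)

end LaurentPolynomial

open LaurentPolynomial in
theorem aeval_add_inv_eq_of_pow_eq_one {K : Type*} [Field K] [Infinite K] (Φ : ℤ[X]) {e n : ℕ}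
    (he : e ≠ 0) (z : ℤ)
    (hΦ : ∀ l : K, l ≠ 0 → aeval (l + l⁻¹) Φ * (l ^ e - 1) = (l ^ (e * n) - 1) * l ^ z)
    {c : K} (hc : c ^ e = 1) : aeval (c + c⁻¹) Φ = n * c ^ z := by
  set ψ : K[T;T⁻¹] := aeval (T 1 + T (-1)) Φ - (∑ i ∈ Finset.range n, T e ^ i) * T z
  have hψ_eval (u : Kˣ) : eval₂ (RingHom.id K) u ψ =
      aeval ((u : K) + (u : K)⁻¹) Φ - (∑ i ∈ Finset.range n, ((u : K) ^ e) ^ i) * (u : K) ^ z := by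
    simp only [ψ, map_mul, map_sub, map_sum, map_pow, eval₂_aeval, map_add, eval₂_T,
      Units.val_zpow_eq_zpow_val, zpow_one, zpow_neg_one, zpow_natCast, Units.val_pow_eq_pow_val,
      Units.val_inv_eq_inv_val]
  have hψ : ψ * (T e - 1) = 0 := by
    refine eq_zero_of_eval₂_eq_zero fun u => ?_
    have hgeom := geom_sum_mul ((u : K) ^ e) n
    rw [← pow_mul] at hgeom
    rw [map_mul, hψ_eval, map_sub, eval₂_T, map_one, Units.val_zpow_eq_zpow_val, zpow_natCast]
    linear_combination hΦ u u.ne_zero - (u : K) ^ z * hgeom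
  have hψ0 : ψ = 0 := (mul_eq_zero.mp hψ).resolve_right
    (sub_ne_zero.mpr (T_ne_one (by exact_mod_cast he)))
  have hc0 : c ≠ 0 := by rintro rfl; simp [he] at hc
  have hψc := hψ_eval (Units.mk0 c hc0)
  simp only [hψ0, map_zero, Units.val_mk0, hc, one_pow, Finset.sum_const, Finset.card_range,
    nsmul_eq_mul, mul_one] at hψc
  linear_combination -hψc

section Scalar
variable {K : Type*} [Field K] [Infinite K] {Φ : ℤ[X]}

theorem aeval_add_inv_eq_zero_iff {e n : ℕ} (he : e ≠ 0) {z : ℤ} (hn : (n : K) ≠ 0)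
    (hΦ : ∀ l : K, l ≠ 0 → aeval (l + l⁻¹) Φ * (l ^ e - 1) = (l ^ (e * n) - 1) * l ^ z)
    {l : K} (hl : l ≠ 0) : aeval (l + l⁻¹) Φ = 0 ↔ l ^ (e * n) = 1 ∧ l ^ e ≠ 1 := by
  by_cases hle : l ^ e = 1
  · simp [aeval_add_inv_eq_of_pow_eq_one Φ he z hΦ hle, hle, hn, zpow_ne_zero z hl]
  have h := hΦ l hl
  simp only [hle, ne_eq, not_false_eq_true, and_true]
  constructor
  · intro hΦl
    rw [hΦl, zero_mul, eq_comm, mul_eq_zero_iff_right (zpow_ne_zero z hl)] at h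
    exact sub_eq_zero.mp h
  · intro hln
    rw [hln, sub_self, zero_mul, mul_eq_zero_iff_right (sub_ne_zero.mpr hle)] at h
    exact h

theorem aeval_add_inv_eq_zero_iff_of_odd {k : ℕ} (hk : Odd k) (hk0 : (k : K) ≠ 0)
    (hΦ : ∀ l : K, l ≠ 0 →
      aeval (l + l⁻¹) Φ * (l - 1) = (l ^ k - 1) * l ^ ((1 - (k : ℤ)) / 2))
    {l : K} (hl : l ≠ 0) : aeval (l + l⁻¹) Φ = 0 ↔ l ^ k = 1 ∧ l ≠ 1 ∧ l ≠ -1 := by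
  have := aeval_add_inv_eq_zero_iff (e := 1) one_ne_zero hk0 (by simpa using hΦ) hl
  rw [this, one_mul, pow_one]
  constructor
  · rintro ⟨hlk, hl1⟩
    refine ⟨hlk, hl1, ?_⟩
    rintro rfl
    exact hl1 (hk.neg_one_pow.symm.trans hlk)
  · exact fun ⟨hlk, hl1, _⟩ => ⟨hlk, hl1⟩

theorem aeval_add_inv_eq_zero_iff_of_even {k : ℕ} (hk : Even k) (hk0 : (k : K) ≠ 0)
    (hΦ : ∀ l : K, l ≠ 0 →
      aeval (l + l⁻¹) Φ * (l ^ 2 - 1) = (l ^ k - 1) * l ^ (1 - (k : ℤ) / 2))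
    {l : K} (hl : l ≠ 0) : aeval (l + l⁻¹) Φ = 0 ↔ l ^ k = 1 ∧ l ≠ 1 ∧ l ≠ -1 := by
  obtain ⟨m, rfl⟩ := hk
  rw [← two_mul] at hk0 hΦ ⊢
  have hm : (m : K) ≠ 0 := by push_cast at hk0; exact right_ne_zero_of_mul hk0
  rw [aeval_add_inv_eq_zero_iff two_ne_zero hm hΦ hl, Ne, sq_eq_one_iff, not_or]

end Scalar

theorem natCast_ne_zero_of_coprime_ringChar {K : Type*} [Field K] {k : ℕ} (hk : 1 ≤ k)
    (hchar : ringChar K = 0 ∨ Nat.Coprime (ringChar K) k) : (k : K) ≠ 0 := by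
  rw [Ne, CharP.cast_eq_zero_iff K (ringChar K)]
  intro hdvd
  rcases hchar with h | h
  · rw [h, zero_dvd_iff] at hdvd
    omega
  · exact CharP.ringChar_ne_one (h.eq_one_of_dvd hdvd)

section Algebra
variable {K A : Type*} [Field K] [Ring A] [Algebra K A]

theorem eq_algebraMap_of_aeval_sq_eq_zero {x : A} {p : K[X]} (hp : p.Separable)
    (hpx : aeval x p = 0) {μ : K} (hμ : aeval x ((X - C μ) ^ 2) = 0) :
    x = algebraMap K A μ := by
  have hsq : Squarefree (minpoly K x) := hp.squarefree.squarefree_of_dvd (minpoly.dvd K x hpx)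
  have hdvd : minpoly K x ∣ X - C μ := (hsq.dvd_pow_iff_dvd two_ne_zero).mp (minpoly.dvd K x hμ)
  simpa [sub_eq_zero] using aeval_eq_zero_of_dvd_aeval_eq_zero hdvd (minpoly.aeval K x)

theorem pow_eq_one_of_aeval_mul_eq_zero {x : A} {a b : K} {k : ℕ} (hab : a ≠ b)
    (ha : a ^ k = 1) (hb : b ^ k = 1) (hx : aeval x ((X - C a) * (X - C b)) = 0) :
    x ^ k = 1 := by
  have hdvd : (X - C a) * (X - C b) ∣ X ^ k - 1 :=
    (isCoprime_X_sub_C_of_isUnit_sub (sub_ne_zero.mpr hab).isUnit).mul_dvd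
      (dvd_iff_isRoot.mpr (by simp [ha])) (dvd_iff_isRoot.mpr (by simp [hb]))
  simpa [sub_eq_zero] using aeval_eq_zero_of_dvd_aeval_eq_zero hdvd hx

theorem pow_eq_one_and_ne_one_and_ne_neg_one_iff [Nontrivial A] {x : A} {l : K} {k : ℕ}
    (hk : (k : K) ≠ 0) (hl : l ≠ 0) (hx : aeval x ((X - C l) * (X - C l⁻¹)) = 0)
    (hlx : l ∈ spectrum K x) :
    x ^ k = 1 ∧ x ≠ 1 ∧ x ≠ -1 ↔ l ^ k = 1 ∧ l ≠ 1 ∧ l ≠ -1 := by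
  have hσ1 : spectrum K (1 : A) = {1} := spectrum.one_eq
  have hσm1 : spectrum K (-1 : A) = {-1} := by
    simpa using spectrum.scalar_eq (A := A) (-1 : K)
  constructor
  · rintro ⟨hxk, hx1, hxm1⟩
    have hlk : l ^ k = 1 := by simpa [hxk, hσ1] using spectrum.pow_mem_pow x k hlx
    have hsep : (X ^ k - C 1 : K[X]).Separable := separable_X_pow_sub_C 1 hk one_ne_zero
    have hscalar : l = 1 ∨ l = -1 → x = algebraMap K A l := fun hl1 => by
      have hinv : l⁻¹ = l := by rcases hl1 with rfl | rfl <;> simp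
      refine eq_algebraMap_of_aeval_sq_eq_zero hsep (by simp [hxk]) ?_
      rwa [hinv, ← sq] at hx
    refine ⟨hlk, fun hl1 => hx1 ?_, fun hlm1 => hxm1 ?_⟩
    · simpa [hl1] using hscalar (.inl hl1)
    · simpa [hlm1] using hscalar (.inr hlm1)
  · rintro ⟨hlk, hl1, hlm1⟩
    have hll : l ≠ l⁻¹ := fun h => by
      have : l ^ 2 = 1 := by rw [sq]; nth_rw 2 [h]; exact mul_inv_cancel₀ hl
      exact (sq_eq_one_iff.mp this).elim hl1 hlm1
    refine ⟨pow_eq_one_of_aeval_mul_eq_zero hll hlk (by rw [inv_pow, hlk, inv_one]) hx,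
      ?_, ?_⟩
    · rintro rfl
      exact hl1 (by simpa [hσ1] using hlx)
    · rintro rfl
      exact hlm1 (by simpa [hσm1] using hlx)

end Algebra

namespace Matrix
variable {K : Type*} [Field K] {M : Matrix (Fin 2) (Fin 2) K}

theorem trace_eq_add_inv_of_mem_spectrum (hM : M.det = 1) {l : K} (hl : l ∈ spectrum K M) :
    M.trace = l + l⁻¹ := by
  rw [mem_spectrum_iff_isRoot_charpoly, charpoly_fin_two, hM, IsRoot.def] at hl
  simp only [eval_add, eval_sub, eval_pow, eval_mul, eval_X, eval_C] at hl
  have hl0 : l ≠ 0 := by rintro rfl; simp at hl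
  field_simp
  linear_combination -hl

theorem charpoly_eq_of_trace_eq_add_inv (hM : M.det = 1) {l : K} (hl : l ≠ 0)
    (htr : M.trace = l + l⁻¹) : M.charpoly = (X - C l) * (X - C l⁻¹) := by
  have h : C l * C l⁻¹ = (1 : K[X]) := by rw [← C_mul, mul_inv_cancel₀ hl, C_1]
  rw [charpoly_fin_two, hM, htr, C_add, C_1]
  linear_combination -h

end Matrix

/-- Let `𝕂` be algebraically closed of characteristic `0` or coprime with `k`, and
`A ∈ SL₂(𝕂)`. Then `Φₖ(tr A) = 0` iff `A^k = Id` and `A ≠ ±Id`, where `Φₖ ∈ ℤ[x]` is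
determined by the defining identity interpreted over `𝕂`. -/
theorem stmt4 (k : ℕ) (hk : 1 ≤ k) (𝕂 : Type*) [Field 𝕂] [IsAlgClosed 𝕂]
    (hchar : ringChar 𝕂 = 0 ∨ Nat.Coprime (ringChar 𝕂) k)
    (Φ : Polynomial ℤ)
    (hΦodd : Odd k → ∀ l : 𝕂, l ≠ 0 →
      (Polynomial.aeval (l + l⁻¹)) Φ * (l - 1) = (l ^ k - 1) * l ^ ((1 - (k : ℤ)) / 2))
    (hΦeven : Even k → ∀ l : 𝕂, l ≠ 0 →
      (Polynomial.aeval (l + l⁻¹)) Φ * (l ^ 2 - 1) = (l ^ k - 1) * l ^ (1 - (k : ℤ) / 2))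
    (A : Matrix.SpecialLinearGroup (Fin 2) 𝕂) :
    Polynomial.aeval (Matrix.trace (A : Matrix (Fin 2) (Fin 2) 𝕂)) Φ = 0 ↔
      (A ^ k = 1 ∧ (A : Matrix (Fin 2) (Fin 2) 𝕂) ≠ 1 ∧
        (A : Matrix (Fin 2) (Fin 2) 𝕂) ≠ -1) := by
  set M : Matrix (Fin 2) (Fin 2) 𝕂 := ↑A
  have hk0 : (k : 𝕂) ≠ 0 := natCast_ne_zero_of_coprime_ringChar hk hchar
  obtain ⟨l, hlM⟩ := spectrum.nonempty_of_isAlgClosed_of_finiteDimensional 𝕂 M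
  have hl0 : l ≠ 0 := by
    rintro rfl
    exact (spectrum.zero_notMem_iff 𝕂).mpr (M.isUnit_iff_isUnit_det.mpr (by simp [M])) hlM
  have htr : M.trace = l + l⁻¹ := M.trace_eq_add_inv_of_mem_spectrum A.2 hlM
  have hCH : aeval M ((X - C l) * (X - C l⁻¹)) = 0 := by
    rw [← M.charpoly_eq_of_trace_eq_add_inv A.2 hl0 htr]
    exact M.aeval_self_charpoly
  have hΦl : aeval (l + l⁻¹) Φ = 0 ↔ l ^ k = 1 ∧ l ≠ 1 ∧ l ≠ -1 := by
    rcases Nat.even_or_odd k with hev | hodd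
    · exact aeval_add_inv_eq_zero_iff_of_even hev hk0 (hΦeven hev) hl0
    · exact aeval_add_inv_eq_zero_iff_of_odd hodd hk0 (hΦodd hodd) hl0
  have hAk : A ^ k = 1 ↔ M ^ k = 1 := by
    rw [← Matrix.SpecialLinearGroup.coe_pow, ← Matrix.SpecialLinearGroup.coe_one]
    exact Subtype.coe_injective.eq_iff.symm
  rw [htr, hΦl, hAk, pow_eq_one_and_ne_one_and_ne_neg_one_iff hk0 hl0 hCH hlM]
end

section
/- Let 𝕂 be an algebraically closed field whose characteristic is 0 or coprime with k, and let A ∈ SL₂(𝕂). Then Ψ_k(tr(A)) = 0 if and only if A^k = -Id and A ≠ -Id. -/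
open Polynomial


lemma stmt5Aux.CH2 {𝕂 : Type*} [Field 𝕂] (M : Matrix (Fin 2) (Fin 2) 𝕂) :
    M * M = (Matrix.trace M) • M - (Matrix.det M) • (1 : Matrix (Fin 2) (Fin 2) 𝕂) := by
  ext i j
  fin_cases i <;> fin_cases j <;>
    simp [Matrix.mul_apply, Fin.sum_univ_two, Matrix.trace_fin_two, Matrix.det_fin_two,
      Matrix.one_apply] <;> ring

lemma stmt5Aux.smul_one_eq_iff {𝕂 : Type*} [Field 𝕂] {a b : 𝕂} :
    a • (1 : Matrix (Fin 2) (Fin 2) 𝕂) = b • 1 ↔ a = b := by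
  constructor
  · intro h
    have := congrFun (congrFun h 0) 0
    simpa [Matrix.one_apply] using this
  · rintro rfl; rfl

lemma stmt5Aux.pow_eig {𝕂 : Type*} [Field 𝕂] (M P : Matrix (Fin 2) (Fin 2) 𝕂) (c : 𝕂)
    (h : M * P = c • P) : ∀ n : ℕ, M ^ n * P = c ^ n • P := by
  intro n
  induction n with
  | zero => simp
  | succ n ih =>
    rw [pow_succ, mul_assoc, h, mul_smul_comm, ih, smul_smul, pow_succ, mul_comm]

lemma stmt5Aux.mat_side {𝕂 : Type*} [Field 𝕂] (k : ℕ) (hk : 1 ≤ k) (hknz : (k : 𝕂) ≠ 0)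
    (M : Matrix (Fin 2) (Fin 2) 𝕂) (l : 𝕂) (hl0 : l ≠ 0)
    (htr : Matrix.trace M = l + l⁻¹) (hdet : Matrix.det M = 1) :
    (M ^ k = -1 ∧ M ≠ -1) ↔ (l ^ k = -1 ∧ l ≠ -1) := by
  have hli : l * l⁻¹ = 1 := mul_inv_cancel₀ hl0
  have hM : M * M = (l + l⁻¹) • M - 1 := by
    have h := stmt5Aux.CH2 M
    rw [htr, hdet, one_smul] at h; exact h
  by_cases hsc : ∃ c : 𝕂, M = c • 1
  · -- scalar case
    obtain ⟨c, rfl⟩ := hsc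
    have hc2 : c ^ 2 = 1 := by
      have h : Matrix.det (c • (1 : Matrix (Fin 2) (Fin 2) 𝕂)) = c ^ 2 := by
        simp [Matrix.det_smul]
      rw [h] at hdet; exact hdet
    have h2c : c * 2 = l + l⁻¹ := by
      have h : Matrix.trace (c • (1 : Matrix (Fin 2) (Fin 2) 𝕂)) = c * 2 := by
        simp [Matrix.trace_smul, Matrix.trace_one]
      rw [h] at htr; exact htr
    have hlc : l = c := by
      have h1 : l ^ 2 + 1 = 2 * c * l := by
        field_simp at h2c
        linear_combination -h2c
      have hsq : (l - c) ^ 2 = 0 := by linear_combination h1 + hc2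
      have := (pow_eq_zero_iff (by norm_num : (2:ℕ) ≠ 0)).mp hsq
      exact sub_eq_zero.mp this
    subst hlc
    rw [_root_.smul_pow, one_pow]
    have hne : (-1 : Matrix (Fin 2) (Fin 2) 𝕂) = (-1 : 𝕂) • 1 := by simp
    simp only [hne, stmt5Aux.smul_one_eq_iff, ne_eq]
  · push_neg at hsc
    by_cases hll : l = l⁻¹
    · -- nilpotent case
      set N : Matrix (Fin 2) (Fin 2) 𝕂 := M - l • 1 with hNdef
      have hN0 : N ≠ 0 := by
        intro h
        apply hsc l
        have h' : M - l • 1 = 0 := by rw [← hNdef]; exact h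
        exact sub_eq_zero.mp h'
      have hl2 : l * l = 1 := by nth_rewrite 2 [hll]; exact hli
      have hM' : M * M = (l + l) • M - 1 := by rw [hM, ← hll]
      have hN2 : N * N = 0 := by
        rw [hNdef]
        simp only [sub_mul, mul_sub, smul_sub, smul_mul_assoc, mul_smul_comm, one_mul,
          mul_one, smul_smul, hM', hl2]
        module
      have hMN : M = l • 1 + N := by rw [hNdef]; module
      have hpow : ∀ n : ℕ, M ^ (n + 1) = (l ^ (n + 1)) • 1 + (((n : 𝕂) + 1) * l ^ n) • N := by
        intro n
        induction n with
        | zero => simpa using hMN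
        | succ n ih =>
          rw [pow_succ, ih, hMN]
          simp only [add_mul, mul_add, smul_add, smul_mul_assoc, mul_smul_comm, smul_smul,
            mul_one, one_mul, hN2, smul_zero, mul_zero]
          push_cast
          module
      constructor
      · rintro ⟨h1, -⟩
        exfalso
        obtain ⟨m, rfl⟩ : ∃ m, k = m + 1 := ⟨k - 1, (Nat.succ_pred_eq_of_pos hk).symm⟩
        rw [hpow m] at h1
        have hc : ((m : 𝕂) + 1) * l ^ m ≠ 0 := by
          apply mul_ne_zero _ (pow_ne_zero _ hl0)
          have h : ((m : 𝕂) + 1) = ((m + 1 : ℕ) : 𝕂) := by push_cast; ring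
          rw [h]; exact hknz
        apply hsc (l + (((m : 𝕂) + 1) * l ^ m)⁻¹ * (-1 - l ^ (m + 1)))
        have h2 : (((m : 𝕂) + 1) * l ^ m) • N = ((-1 : 𝕂) - l ^ (m + 1)) • 1 := by
          rw [sub_smul, neg_one_smul, eq_sub_iff_add_eq, add_comm]
          exact h1
        have hNval : N = ((((m : 𝕂) + 1) * l ^ m)⁻¹ * (-1 - l ^ (m + 1))) • 1 := by
          rw [← smul_smul, ← h2, smul_smul, inv_mul_cancel₀ hc, one_smul]
        rw [hMN, hNval, ← add_smul]
      · rintro ⟨h1, h2⟩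
        exfalso
        rcases mul_self_eq_one_iff.mp hl2 with h | h
        · rw [h, one_pow] at h1
          exact h2 (h.trans h1)
        · exact h2 h
    · -- distinct eigenvalues case
      set P : Matrix (Fin 2) (Fin 2) 𝕂 := M - l⁻¹ • 1 with hPdef
      set Q : Matrix (Fin 2) (Fin 2) 𝕂 := M - l • 1 with hQdef
      have hPne : P ≠ 0 := by
        intro h
        apply hsc l⁻¹
        have h' : M - l⁻¹ • 1 = 0 := by rw [← hPdef]; exact h
        exact sub_eq_zero.mp h'
      have hP : M * P = l • P := by
        rw [hPdef, mul_sub, hM, mul_smul_comm, mul_one, smul_sub, smul_smul, hli]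
        module
      have hQ : M * Q = l⁻¹ • Q := by
        rw [hQdef, mul_sub, hM, mul_smul_comm, mul_one, smul_sub, smul_smul,
          mul_comm l⁻¹ l, hli]
        module
      have hPQ : P - Q = (l - l⁻¹) • 1 := by rw [hPdef, hQdef, sub_smul]; module
      have hllne : l - l⁻¹ ≠ 0 := sub_ne_zero.mpr hll
      have hlm1 : l ≠ -1 := by
        intro h
        exact hll (by rw [h, inv_neg, inv_one])
      constructor
      · rintro ⟨h1, -⟩
        have hkP := stmt5Aux.pow_eig M P l hP k
        rw [h1, neg_one_mul] at hkP
        have hz : (l ^ k + 1) • P = 0 := by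
          rw [add_smul, one_smul, ← hkP, neg_add_cancel]
        rcases smul_eq_zero.mp hz with h | h
        · exact ⟨eq_neg_of_add_eq_zero_left h, hlm1⟩
        · exact absurd h hPne
      · rintro ⟨h1, h2⟩
        have hkinv : (l⁻¹) ^ k = -1 := by rw [inv_pow, h1, inv_neg, inv_one]
        have hkP := stmt5Aux.pow_eig M P l hP k
        have hkQ := stmt5Aux.pow_eig M Q l⁻¹ hQ k
        have e1 : M ^ k * (P - Q) = (l - l⁻¹) • M ^ k := by
          rw [hPQ, mul_smul_comm, mul_one]
        have e2 : M ^ k * (P - Q) = l ^ k • P - (l⁻¹) ^ k • Q := by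
          rw [mul_sub, hkP, hkQ]
        rw [h1, hkinv] at e2
        have e3 : (l - l⁻¹) • M ^ k = (l - l⁻¹) • (-1 : Matrix (Fin 2) (Fin 2) 𝕂) := by
          rw [← e1, e2]
          have e4 : (-1 : 𝕂) • P - (-1 : 𝕂) • Q = -(P - Q) := by module
          rw [e4, hPQ]
          module
        have hMk : M ^ k = -1 := smul_right_injective _ hllne e3
        refine ⟨hMk, fun h => hsc (-1) (by rw [h]; simp)⟩


lemma stmt5Aux.psi_neg_two {𝕂 : Type*} [Field 𝕂] [Infinite 𝕂] (k : ℕ) (ho : Odd k)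
    (hknz : (k : 𝕂) ≠ 0) (Ψ : Polynomial ℤ)
    (hΨodd : ∀ l : 𝕂, l ≠ 0 →
      (aeval (l + l⁻¹)) Ψ * (l + 1) = (l ^ k + 1) * l ^ ((1 - (k : ℤ)) / 2)) :
    (aeval (-2 : 𝕂)) Ψ ≠ 0 := by
  obtain ⟨m, hkm⟩ := ho
  set d := Ψ.natDegree with hd
  have hm : (1 - (k : ℤ)) / 2 = -(m : ℤ) := by omega
  set P : 𝕂[X] := ∑ i ∈ Finset.range (d + 1),
      C ((Ψ.coeff i : ℤ) : 𝕂) * (X ^ 2 + 1) ^ i * X ^ (d - i) with hP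
  have heval : ∀ l : 𝕂, l ≠ 0 → P.eval l = (aeval (l + l⁻¹)) Ψ * l ^ d := by
    intro l hl0
    rw [hP, aeval_eq_sum_range, eval_finset_sum, Finset.sum_mul]
    apply Finset.sum_congr rfl
    intro i hi
    have hile : i ≤ d := Nat.lt_succ_iff.mp (Finset.mem_range.mp hi)
    have hfac : (l ^ 2 + 1) = (l + l⁻¹) * l := by field_simp
    rw [eval_mul, eval_mul, eval_C, eval_pow, eval_pow, eval_add, eval_pow, eval_one,
      eval_X, zsmul_eq_mul, hfac, mul_pow]
    rw [mul_assoc, mul_assoc, ← pow_add, Nat.add_sub_cancel' hile, mul_assoc]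
  set S : 𝕂[X] := ∑ j ∈ Finset.range k, (-X) ^ j with hS
  have hfact : S * (X + 1) = X ^ k + 1 := by
    have hg := geom_sum_mul (-X : 𝕂[X]) k
    rw [Odd.neg_pow ⟨m, hkm⟩] at hg
    have : S * (X + 1) = -((∑ i ∈ Finset.range k, (-X : 𝕂[X]) ^ i) * (-X - 1)) := by
      rw [hS]; ring
    rw [this, hg]; ring
  have hX1 : (X + 1 : 𝕂[X]) ≠ 0 := fun h => by simpa using congrArg (eval 0) h
  have hkey : P * X ^ m * (X + 1) = (X ^ k + 1) * X ^ d := by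
    apply eq_of_infinite_eval_eq
    refine Set.Infinite.mono ?_ ((Set.finite_singleton (0 : 𝕂)).infinite_compl)
    intro x hx
    · have hx0 : x ≠ 0 := hx
      have hxm : x ^ m ≠ 0 := pow_ne_zero _ hx0
      have h1 := hΨodd x hx0
      rw [hm, zpow_neg, zpow_natCast] at h1
      have h2 : (aeval (x + x⁻¹)) Ψ * (x + 1) * x ^ m = x ^ k + 1 := by
        rw [h1, mul_assoc, inv_mul_cancel₀ hxm, mul_one]
      simp only [Set.mem_setOf_eq, eval_mul, eval_pow, eval_X, eval_add, eval_one,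
        heval x hx0]
      linear_combination (x : 𝕂) ^ d * h2
  have hkey2 : (X ^ k + 1 : 𝕂[X]) * X ^ d = S * X ^ d * (X + 1) := by
    rw [← hfact]; ring
  have hcancel : P * X ^ m = S * X ^ d :=
    mul_right_cancel₀ hX1 (hkey.trans hkey2)
  have hev := congrArg (eval (-1 : 𝕂)) hcancel
  have hm1 : (-1 : 𝕂) + (-1)⁻¹ = -2 := by rw [inv_neg, inv_one]; norm_num
  rw [eval_mul, eval_mul, eval_pow, eval_pow, eval_X, heval (-1) (by norm_num), hm1] at hev
  have hSval : S.eval (-1 : 𝕂) = (k : 𝕂) := by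
    rw [hS, eval_finset_sum]
    simp
  rw [hSval] at hev
  intro h0
  rw [h0, zero_mul, zero_mul] at hev
  exact (mul_ne_zero hknz (pow_ne_zero _ (by norm_num : (-1 : 𝕂) ≠ 0))) hev.symm



lemma stmt5Aux.psi_side {𝕂 : Type*} [Field 𝕂] [Infinite 𝕂] (k : ℕ) (hk : 1 ≤ k)
    (hknz : (k : 𝕂) ≠ 0) (Ψ : Polynomial ℤ)
    (hΨodd : Odd k → ∀ l : 𝕂, l ≠ 0 →
      (aeval (l + l⁻¹)) Ψ * (l + 1) = (l ^ k + 1) * l ^ ((1 - (k : ℤ)) / 2))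
    (hΨeven : Even k → ∀ l : 𝕂, l ≠ 0 →
      (aeval (l + l⁻¹)) Ψ = (l ^ k + 1) * l ^ (-((k : ℤ) / 2)))
    (l : 𝕂) (hl0 : l ≠ 0) :
    (aeval (l + l⁻¹)) Ψ = 0 ↔ (l ^ k = -1 ∧ l ≠ -1) := by
  rcases Nat.even_or_odd k with he | ho
  · have h2 : (2 : 𝕂) ≠ 0 := by
      intro h2
      apply hknz
      obtain ⟨m, rfl⟩ := he
      push_cast
      rw [show ((m : 𝕂) + m) = 2 * m by ring, h2, zero_mul]
    rw [hΨeven he l hl0]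
    have hz : l ^ (-((k : ℤ) / 2)) ≠ 0 := zpow_ne_zero _ hl0
    constructor
    · intro h
      rcases mul_eq_zero.mp h with h | h
      · refine ⟨eq_neg_of_add_eq_zero_left h, ?_⟩
        rintro rfl
        rw [he.neg_one_pow] at h
        apply h2
        linear_combination h
      · exact absurd h hz
    · rintro ⟨h1, -⟩
      rw [h1, neg_add_cancel, zero_mul]
  · by_cases hl1 : l = -1
    · subst hl1
      rw [show ((-1 : 𝕂) + (-1)⁻¹) = -2 by rw [inv_neg, inv_one]; norm_num]
      constructor
      · intro h
        exact absurd h (stmt5Aux.psi_neg_two k ho hknz Ψ (hΨodd ho))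
      · rintro ⟨-, h⟩
        exact absurd rfl h
    · have h := hΨodd ho l hl0
      have hl1' : l + 1 ≠ 0 := fun h' => hl1 (eq_neg_of_add_eq_zero_left h')
      have hz : l ^ ((1 - (k : ℤ)) / 2) ≠ 0 := zpow_ne_zero _ hl0
      constructor
      · intro h0
        rw [h0, zero_mul] at h
        rcases mul_eq_zero.mp h.symm with h' | h'
        · exact ⟨eq_neg_of_add_eq_zero_left h', hl1⟩
        · exact absurd h' hz
      · rintro ⟨h1, -⟩
        rw [h1, neg_add_cancel, zero_mul] at h
        rcases mul_eq_zero.mp h with h' | h'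
        · exact h'
        · exact absurd h' hl1'



/-- Let `𝕂` be algebraically closed of characteristic `0` or coprime with `k`, and
`A ∈ SL₂(𝕂)`. Then `Ψₖ(tr A) = 0` iff `A^k = -Id` and `A ≠ -Id`, where `Ψₖ ∈ ℤ[x]` is
determined by the defining identity interpreted over `𝕂`. -/
theorem stmt5 (k : ℕ) (hk : 1 ≤ k) (𝕂 : Type*) [Field 𝕂] [IsAlgClosed 𝕂]
    (hchar : ringChar 𝕂 = 0 ∨ Nat.Coprime (ringChar 𝕂) k)
    (Ψ : Polynomial ℤ)
    (hΨodd : Odd k → ∀ l : 𝕂, l ≠ 0 →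
      (Polynomial.aeval (l + l⁻¹)) Ψ * (l + 1) = (l ^ k + 1) * l ^ ((1 - (k : ℤ)) / 2))
    (hΨeven : Even k → ∀ l : 𝕂, l ≠ 0 →
      (Polynomial.aeval (l + l⁻¹)) Ψ = (l ^ k + 1) * l ^ (-((k : ℤ) / 2)))
    (A : Matrix.SpecialLinearGroup (Fin 2) 𝕂) :
    Polynomial.aeval (Matrix.trace (A : Matrix (Fin 2) (Fin 2) 𝕂)) Ψ = 0 ↔
      (((A ^ k : Matrix.SpecialLinearGroup (Fin 2) 𝕂) : Matrix (Fin 2) (Fin 2) 𝕂) = -1 ∧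
        (A : Matrix (Fin 2) (Fin 2) 𝕂) ≠ -1) := by
  have hknz : (k : 𝕂) ≠ 0 := by
    rcases hchar with h0 | hcop
    · have hcp := ringChar.charP 𝕂
      rw [h0] at hcp
      haveI : CharZero 𝕂 := @CharP.charP_to_charZero 𝕂 _ hcp
      exact Nat.cast_ne_zero.mpr (by omega)
    · intro hzero
      rw [CharP.cast_eq_zero_iff 𝕂 (ringChar 𝕂) k] at hzero
      have h1 : ringChar 𝕂 ∣ 1 := by
        rw [← hcop]
        exact Nat.dvd_gcd dvd_rfl hzero
      exact CharP.ringChar_ne_one (Nat.dvd_one.mp h1)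
  set M : Matrix (Fin 2) (Fin 2) 𝕂 := (A : Matrix (Fin 2) (Fin 2) 𝕂) with hMdef
  have hdet : Matrix.det M = 1 := A.prop
  set t : 𝕂 := Matrix.trace M with htdef
  obtain ⟨l, hl⟩ := IsAlgClosed.exists_root (C 1 * X ^ 2 + C (-t) * X + C 1)
    (by rw [Polynomial.degree_quadratic one_ne_zero]; exact (by norm_num))
  have hroot : l ^ 2 - t * l + 1 = 0 := by
    have := hl
    rw [Polynomial.IsRoot] at this
    simp only [eval_add, eval_mul, eval_C, eval_pow, eval_X] at this
    linear_combination this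
  have hl0 : l ≠ 0 := by
    intro h
    rw [h] at hroot
    simp at hroot
  have htr : t = l + l⁻¹ := by
    field_simp
    linear_combination -hroot
  have hApow : ((A ^ k : Matrix.SpecialLinearGroup (Fin 2) 𝕂) : Matrix (Fin 2) (Fin 2) 𝕂)
      = M ^ k := Matrix.SpecialLinearGroup.coe_pow A k
  rw [htr, hApow]
  exact (stmt5Aux.psi_side k hk hknz Ψ hΨodd hΨeven l hl0).trans
    (stmt5Aux.mat_side k hk hknz M l hl0 (htdef ▸ htr) hdet).symm
end

section
/- Let p > 2 be a prime, let k = p^r·k' with r ≥ 1 maximal (so gcd(k', p) = 1), and suppose k is odd. Then Φ_k(u) ≡ Φ_{k'}(u)^{p^r} · (u - 2)^{(p^r - 1)/2} mod p, as polynomials in 𝔽_p[u]. -/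
/-!
Write `k = 2m + 1`. Substituting `u = λ + λ⁻¹` turns the defining identity into
`Φₖ(λ + λ⁻¹) · λ^m = 1 + λ + ⋯ + λ^(k-1)`; clearing denominators with `X^(deg Φₖ)` makes
this an identity in `ℤ[X]`, so it survives reduction mod `p`. In characteristic `p`,
Frobenius gives `1 + ⋯ + λ^(p^r k' - 1) = (1 + ⋯ + λ^(k'-1))^(p^r) · (λ - 1)^(p^r - 1)`,
and `(λ - 1)² = (u - 2) λ`. Hence both sides of the congruence agree at `u = λ + λ⁻¹` for
every `λ ≠ 0` of an algebraic closure of `𝔽ₚ`, which is every `u`.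
-/

open Polynomial Finset

/-- `X ^ Φ.natDegree * Φ (X + X⁻¹)`, as a polynomial. -/
noncomputable def joukowskiCleared {R : Type*} [Semiring R] (Φ : R[X]) : R[X] :=
  Φ.sum fun j a => C a * (X ^ 2 + 1) ^ j * X ^ (Φ.natDegree - j)

theorem eval₂_joukowskiCleared {R S : Type*} [Semiring R] [CommSemiring S] (f : R →+* S)
    (Φ : R[X]) {μ ν : S} (h : μ * ν = 1) :
    (joukowskiCleared Φ).eval₂ f μ = μ ^ Φ.natDegree * Φ.eval₂ f (μ + ν) := by
  rw [joukowskiCleared, Polynomial.sum_def, eval₂_finsetSum, eval₂_eq_sum, Polynomial.sum_def,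
    mul_sum]
  refine sum_congr rfl fun j hj => ?_
  have hsq : μ ^ 2 + 1 = μ * (μ + ν) := by rw [mul_add, h]; ring
  have hpow : μ ^ Φ.natDegree = μ ^ j * μ ^ (Φ.natDegree - j) := by
    rw [← pow_add, Nat.add_sub_cancel' (le_natDegree_of_mem_supp j hj)]
  simp only [eval₂_mul, eval₂_C, eval₂_pow, eval₂_add, eval₂_X, eval₂_one]
  rw [hsq, mul_pow, hpow]
  ring

theorem joukowskiCleared_mul_X_pow_eq {k m : ℕ} (hk : k = 2 * m + 1) (Φ : ℤ[X])
    (hΦ : ∀ l : ℂ, l ≠ 0 →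
      (aeval (l + l⁻¹)) Φ * (l - 1) = (l ^ k - 1) * l ^ ((1 - (k : ℤ)) / 2)) :
    joukowskiCleared Φ * X ^ m = (∑ i ∈ range k, X ^ i) * X ^ Φ.natDegree := by
  refine map_injective (Int.castRingHom ℂ) Int.cast_injective <|
    eq_of_infinite_eval_eq _ _ <| (Set.toFinite {0, 1}).infinite_compl.mono fun l hl => ?_
  simp only [Set.mem_compl_iff, Set.mem_insert_iff, Set.mem_singleton_iff, not_or] at hl
  obtain ⟨hl0, hl1⟩ := hl
  have hexp : (1 - (k : ℤ)) / 2 = -(m : ℤ) := by omega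
  have key := hΦ l hl0
  rw [hexp, zpow_neg, zpow_natCast, aeval_def, algebraMap_int_eq] at key
  have hΦl : eval₂ (Int.castRingHom ℂ) (l + l⁻¹) Φ * l ^ m = ∑ i ∈ range k, l ^ i := by
    refine mul_right_cancel₀ (sub_ne_zero.mpr hl1) ?_
    rw [geom_sum_mul, mul_right_comm, key, mul_assoc, inv_mul_cancel₀ (pow_ne_zero m hl0),
      mul_one]
  simp only [Set.mem_ofPred_eq, Polynomial.map_mul, Polynomial.map_pow, map_X, eval_mul,
    eval_pow, eval_X, Polynomial.map_sum, eval_finsetSum, eval_map,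
    eval₂_joukowskiCleared _ _ (mul_inv_cancel₀ hl0), ← hΦl]
  ring

theorem eval_add_inv_mul_pow_eq_geom_sum {R F : Type*} [CommRing R] [Field F] (f : R →+* F)
    {Φ : R[X]} {k m : ℕ}
    (hΦ : joukowskiCleared Φ * X ^ m = (∑ i ∈ range k, X ^ i) * X ^ Φ.natDegree)
    {μ : F} (hμ : μ ≠ 0) :
    (Φ.map f).eval (μ + μ⁻¹) * μ ^ m = ∑ i ∈ range k, μ ^ i := by
  have h := congrArg (eval₂ f μ) hΦ
  simp only [eval₂_mul, eval₂_pow, eval₂_X, eval₂_finsetSum,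
    eval₂_joukowskiCleared f Φ (mul_inv_cancel₀ hμ)] at h
  rw [eval_map]
  refine mul_right_cancel₀ (pow_ne_zero Φ.natDegree hμ) ?_
  linear_combination h

theorem IsAlgClosed.exists_add_inv_eq {K : Type*} [Field K] [IsAlgClosed K] (c : K) :
    ∃ μ : K, μ ≠ 0 ∧ μ + μ⁻¹ = c := by
  obtain ⟨μ, hμ⟩ := IsAlgClosed.exists_root (X ^ 2 - C c * X + 1) (by
    rw [show (X ^ 2 - C c * X + 1 : K[X]).degree = 2 by compute_degree!]; decide)
  have hμc : μ ^ 2 - c * μ + 1 = 0 := by simpa using hμ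
  have hμ0 : μ ≠ 0 := by rintro rfl; simp at hμc
  refine ⟨μ, hμ0, ?_⟩
  field_simp
  linear_combination hμc

theorem geom_sum_expChar_pow_mul {R : Type*} [CommRing R] (p : ℕ) [ExpChar R p] (r n : ℕ)
    (x : R) :
    ∑ i ∈ range (p ^ r * n), x ^ i =
      (∑ i ∈ range n, x ^ i) ^ p ^ r * (x - 1) ^ (p ^ r - 1) := by
  suffices h : ∑ i ∈ range (p ^ r * n), (X : R[X]) ^ i
      = (∑ i ∈ range n, X ^ i) ^ p ^ r * (X - 1) ^ (p ^ r - 1) by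
    simpa [eval_geom_sum] using congrArg (eval x) h
  have hq : 1 ≤ p ^ r := Nat.one_le_pow _ _ (expChar_pos R p)
  refine (monic_X_sub_C (1 : R)).isRegular.right ?_
  simp only [map_one]
  show _ * (X - 1) = _ * (X - 1)
  rw [geom_sum_mul, mul_assoc, ← pow_succ, Nat.sub_add_cancel hq, ← mul_pow, geom_sum_mul,
    sub_pow_expChar_pow, one_pow, ← pow_mul, mul_comm]

theorem eq_pow_mul_add_inv_sub_two_pow {F : Type*} [Field F] (p : ℕ) [ExpChar F p]
    {r s n m : ℕ} (hq : p ^ r = 2 * s + 1) {μ a b : F} (hμ : μ ≠ 0)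
    (ha : a * μ ^ (p ^ r * m + s) = ∑ i ∈ range (p ^ r * n), μ ^ i)
    (hb : b * μ ^ m = ∑ i ∈ range n, μ ^ i) :
    a = b ^ p ^ r * (μ + μ⁻¹ - 2) ^ s := by
  have hsq : (μ - 1) ^ 2 = (μ + μ⁻¹ - 2) * μ := by field_simp; ring
  refine mul_right_cancel₀ (pow_ne_zero (p ^ r * m + s) hμ) ?_
  rw [ha, geom_sum_expChar_pow_mul, ← hb, hq, Nat.add_sub_cancel, pow_mul, hsq, mul_pow _ μ s]
  ring

theorem map_eq_of_joukowskiCleared (p : ℕ) [Fact p.Prime] {r s n m : ℕ}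
    (hq : p ^ r = 2 * s + 1) {Φ Ψ : ℤ[X]}
    (hΦ : joukowskiCleared Φ * X ^ (p ^ r * m + s) =
      (∑ i ∈ range (p ^ r * n), X ^ i) * X ^ Φ.natDegree)
    (hΨ : joukowskiCleared Ψ * X ^ m = (∑ i ∈ range n, X ^ i) * X ^ Ψ.natDegree) :
    Φ.map (Int.castRingHom (ZMod p)) =
      (Ψ.map (Int.castRingHom (ZMod p))) ^ p ^ r * (X - 2) ^ s := by
  let σ := algebraMap (ZMod p) (AlgebraicClosure (ZMod p))
  refine map_injective σ σ.injective <| Polynomial.funext fun c => ?_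
  obtain ⟨μ, hμ, rfl⟩ := IsAlgClosed.exists_add_inv_eq c
  simp only [Polynomial.map_mul, Polynomial.map_pow, Polynomial.map_sub, map_X,
    Polynomial.map_ofNat, Polynomial.map_map, eval_mul, eval_pow, eval_sub, eval_X, eval_ofNat]
  exact eq_pow_mul_add_inv_sub_two_pow p hq hμ
    (eval_add_inv_mul_pow_eq_geom_sum _ hΦ hμ) (eval_add_inv_mul_pow_eq_geom_sum _ hΨ hμ)

theorem stmt6_general (p : ℕ) (hp : p.Prime) (r k' k : ℕ) (hk : k = p ^ r * k') (hkodd : Odd k)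
    (Φk Φk' : Polynomial ℤ)
    (hΦk : ∀ l : ℂ, l ≠ 0 →
      (Polynomial.aeval (l + l⁻¹)) Φk * (l - 1) = (l ^ k - 1) * l ^ ((1 - (k : ℤ)) / 2))
    (hΦk' : ∀ l : ℂ, l ≠ 0 →
      (Polynomial.aeval (l + l⁻¹)) Φk' * (l - 1) = (l ^ k' - 1) * l ^ ((1 - (k' : ℤ)) / 2)) :
    Φk.map (Int.castRingHom (ZMod p)) =
      (Φk'.map (Int.castRingHom (ZMod p))) ^ (p ^ r) * (X - 2) ^ ((p ^ r - 1) / 2) := by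
  have : Fact p.Prime := ⟨hp⟩
  obtain ⟨hqodd, hk'odd⟩ := Nat.odd_mul.mp (hk ▸ hkodd)
  obtain ⟨s, hs⟩ := hqodd
  obtain ⟨m, hm⟩ := hk'odd
  have hkm : k = 2 * (p ^ r * m + s) + 1 := by rw [hk, hm, hs]; ring
  have hΦ := joukowskiCleared_mul_X_pow_eq hkm Φk hΦk
  rw [hk] at hΦ
  rw [show (p ^ r - 1) / 2 = s by omega]
  exact map_eq_of_joukowskiCleared p hs hΦ (joukowskiCleared_mul_X_pow_eq hm Φk' hΦk')

/-- Let `p > 2` be prime, `k = p^r·k'` with `r ≥ 1` and `gcd(k',p) = 1`, `k` odd. Then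
`Φₖ(u) ≡ Φₖ'(u)^{p^r}·(u-2)^{(p^r-1)/2} (mod p)` in `𝔽ₚ[u]`. -/
theorem stmt6 (p : ℕ) (hp : p.Prime) (hp2 : 2 < p) (r k' k : ℕ) (hr : 1 ≤ r)
    (hcop : Nat.Coprime k' p) (hk : k = p ^ r * k') (hkodd : Odd k)
    (Φk Φk' : Polynomial ℤ)
    (hΦk : ∀ l : ℂ, l ≠ 0 →
      (Polynomial.aeval (l + l⁻¹)) Φk * (l - 1) = (l ^ k - 1) * l ^ ((1 - (k : ℤ)) / 2))
    (hΦk' : ∀ l : ℂ, l ≠ 0 →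
      (Polynomial.aeval (l + l⁻¹)) Φk' * (l - 1) = (l ^ k' - 1) * l ^ ((1 - (k' : ℤ)) / 2)) :
    Φk.map (Int.castRingHom (ZMod p)) =
      (Φk'.map (Int.castRingHom (ZMod p))) ^ (p ^ r) * (X - 2) ^ ((p ^ r - 1) / 2) :=
  stmt6_general p hp r k' k hk hkodd Φk Φk' hΦk hΦk'
end

section
/- Let p > 2 be a prime and let k = p^r·k' with r ≥ 1 maximal. If k is even, then Ψ_k(u) ≡ Ψ_{k'}(u)^{p^r} mod p; if k is odd, then Ψ_k(u) ≡ Ψ_{k'}(u)^{p^r} · (u + 2)^{(p^r - 1)/2} mod p. -/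
open Polynomial

private lemma aux_l_ne (n : ℕ) : ((n : ℂ) + 2) ≠ 0 := by
  have : ((n : ℂ) + 2) = ((n + 2 : ℕ) : ℂ) := by push_cast; ring
  rw [this, Ne, Nat.cast_eq_zero]
  omega

private lemma aux_inj :
    Function.Injective (fun n : ℕ => ((n : ℂ) + 2) + ((n : ℂ) + 2)⁻¹) := by
  intro a b hab
  simp only at hab
  have ha := aux_l_ne a
  have hb := aux_l_ne b
  have hmul : (((a : ℂ) + 2) * ((b : ℂ) + 2)) ≠ 1 := by
    have : (((a : ℂ) + 2) * ((b : ℂ) + 2)) = (((a + 2) * (b + 2) : ℕ) : ℂ) := by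
      push_cast; ring
    rw [this]
    intro h
    have : ((a + 2) * (b + 2) : ℕ) = ((1 : ℕ) : ℂ) := by simpa using h
    have h4 : ((a + 2) * (b + 2) : ℕ) = 1 := Nat.cast_injective this
    nlinarith [h4]
  have key : ((a : ℂ) + 2) = ((b : ℂ) + 2) := by
    field_simp at hab
    have h2 : (((a:ℂ)+2) - ((b:ℂ)+2)) * (((a:ℂ)+2) * ((b:ℂ)+2) - 1) = 0 := by
      linear_combination hab
    rcases mul_eq_zero.mp h2 with h | h
    · exact sub_eq_zero.mp h
    · exact absurd (sub_eq_zero.mp h) hmul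
  have : (a : ℂ) = b := by linear_combination key
  exact_mod_cast this

private lemma aux_poly_eq (P Q : Polynomial ℤ)
    (h : ∀ n : ℕ, Polynomial.aeval (((n : ℂ) + 2) + ((n : ℂ) + 2)⁻¹) P =
      Polynomial.aeval (((n : ℂ) + 2) + ((n : ℂ) + 2)⁻¹) Q) : P = Q := by
  have hmap : P.map (Int.castRingHom ℂ) = Q.map (Int.castRingHom ℂ) := by
    apply Polynomial.eq_of_infinite_eval_eq
    apply Set.infinite_of_injective_forall_mem aux_inj
    intro n
    have := h n
    simp only [Set.mem_setOf_eq, eval_map]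
    rw [aeval_def] at this
    rw [aeval_def] at this
    exact this
  exact Polynomial.map_injective _ Int.cast_injective hmap

private lemma aux_aeval_dickson (x : ℂ) (n : ℕ) :
    Polynomial.aeval x (dickson 1 (1 : ℤ) n) = (dickson 1 (1 : ℂ) n).eval x := by
  rw [aeval_def, ← eval_map, map_dickson]
  norm_num

private lemma psi_even (k : ℕ) (hk : Even k) (Ψ : Polynomial ℤ)
    (h : ∀ l : ℂ, l ≠ 0 →
      Polynomial.aeval (l + l⁻¹) Ψ = (l ^ k + 1) * l ^ (-((k : ℤ) / 2))) :
    Ψ = dickson 1 1 (k / 2) := by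
  obtain ⟨m, hm⟩ := hk
  apply aux_poly_eq
  intro n
  set l : ℂ := (n : ℂ) + 2 with hl
  have hl0 : l ≠ 0 := aux_l_ne n
  have hlm : l ^ m ≠ 0 := pow_ne_zero _ hl0
  rw [h l hl0, aux_aeval_dickson,
    dickson_one_one_eval_add_inv l l⁻¹ (mul_inv_cancel₀ hl0)]
  have hk2 : k / 2 = m := by omega
  have he : -((k : ℤ) / 2) = -(m : ℤ) := by
    have : (k : ℤ) = 2 * m := by push_cast; omega
    rw [this]; omega
  rw [hk2, he, zpow_neg, zpow_natCast, inv_pow, hm]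
  field_simp
  ring

private lemma psi_odd_sq (k : ℕ) (hk : Odd k) (Ψ : Polynomial ℤ)
    (h : ∀ l : ℂ, l ≠ 0 →
      Polynomial.aeval (l + l⁻¹) Ψ * (l + 1) = (l ^ k + 1) * l ^ ((1 - (k : ℤ)) / 2)) :
    Ψ ^ 2 * (X + 2) = dickson 1 1 k + 2 := by
  obtain ⟨j, hj⟩ := hk
  apply aux_poly_eq
  intro n
  set l : ℂ := (n : ℂ) + 2 with hldef
  have hl0 : l ≠ 0 := aux_l_ne n
  have hl1 : l + 1 ≠ 0 := by
    have : l + 1 = ((n + 3 : ℕ) : ℂ) := by rw [hldef]; push_cast; ring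
    rw [this, Ne, Nat.cast_eq_zero]; omega
  have ht0 : (l ^ j : ℂ) ≠ 0 := pow_ne_zero _ hl0
  set t : ℂ := l ^ j with htdef
  have hlk : l ^ k = t ^ 2 * l := by rw [htdef, hj, ← pow_mul, pow_succ]; ring
  have he : ((1 - (k : ℤ)) / 2) = -(j : ℤ) := by
    have : (k : ℤ) = 2 * j + 1 := by push_cast; omega
    rw [this]; omega
  have key : Polynomial.aeval (l + l⁻¹) Ψ * (l + 1) * t = l ^ k + 1 := by
    rw [h l hl0, he, zpow_neg, zpow_natCast, ← htdef]
    field_simp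
  set s : ℂ := Polynomial.aeval (l + l⁻¹) Ψ with hsdef
  -- goal : aeval (Ψ^2 * (X+2)) = aeval (dickson + 2)
  have hgoal2 : Polynomial.aeval (l + l⁻¹) (Ψ ^ 2 * (X + 2)) = s ^ 2 * (l + l⁻¹ + 2) := by
    simp only [map_mul, map_pow, map_add, aeval_X, map_ofNat, ← hsdef]
  have hgoalr : Polynomial.aeval (l + l⁻¹) (dickson 1 (1:ℤ) k + 2) =
      t ^ 2 * l + (t ^ 2 * l)⁻¹ + 2 := by
    simp only [map_add, map_ofNat, aux_aeval_dickson,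
      dickson_one_one_eval_add_inv l l⁻¹ (mul_inv_cancel₀ hl0)]
    rw [inv_pow, hlk]
  rw [hgoal2, hgoalr]
  have hw : (t ^ 2 * l) ≠ 0 := mul_ne_zero (pow_ne_zero _ ht0) hl0
  apply mul_right_cancel₀ hw
  have hinv : l * l⁻¹ = 1 := mul_inv_cancel₀ hl0
  have hinv2 : (t ^ 2 * l) * (t ^ 2 * l)⁻¹ = 1 := mul_inv_cancel₀ hw
  have key2 : s ^ 2 * (l + 1) ^ 2 * t ^ 2 = (t ^ 2 * l + 1) ^ 2 := by
    have hk' := key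
    rw [hlk] at hk'
    linear_combination (s * (l + 1) * t + (t ^ 2 * l + 1)) * hk'
  linear_combination key2 + s^2*t^2*hinv - hinv2

private lemma psi_eval_two (k : ℕ) (Ψ : Polynomial ℤ)
    (h : ∀ l : ℂ, l ≠ 0 →
      Polynomial.aeval (l + l⁻¹) Ψ * (l + 1) = (l ^ k + 1) * l ^ ((1 - (k : ℤ)) / 2)) :
    Ψ.eval 2 = 1 := by
  have h1 := h 1 one_ne_zero
  have h2 : Polynomial.aeval ((1 : ℂ) + 1⁻¹) Ψ = ((Ψ.eval 2 : ℤ) : ℂ) := by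
    have he : (1 : ℂ) + 1⁻¹ = ((2 : ℕ) : ℂ) := by norm_num
    rw [he, aeval_def, eval₂_at_natCast]
    norm_num
  rw [h2] at h1
  simp only [one_pow, one_zpow, inv_one] at h1
  have : ((Ψ.eval 2 : ℤ) : ℂ) = 1 := by
    have h3 : ((Ψ.eval 2 : ℤ) : ℂ) * 2 = 2 := by linear_combination h1
    linear_combination h3 / 2
  exact_mod_cast this

private lemma dickson_pr (p : ℕ) [Fact p.Prime] (r : ℕ) :
    dickson 1 (1 : ZMod p) (p ^ r) = X ^ (p ^ r) := by
  induction r with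
  | zero => simp
  | succ r ih =>
    rw [pow_succ, dickson_one_one_mul, ih, dickson_one_one_zmod_p, pow_comp, X_comp, ← pow_mul,
      mul_comm p (p ^ r)]

private lemma expand_pow_card (p : ℕ) [Fact p.Prime] (r : ℕ) (f : Polynomial (ZMod p)) :
    Polynomial.expand (ZMod p) (p ^ r) f = f ^ (p ^ r) := by
  induction r with
  | zero => simp
  | succ r ih =>
    rw [pow_succ, ← expand_expand, ZMod.expand_card, map_pow, ih, ← pow_mul, mul_comm (p ^ r) p,
      pow_mul]

private lemma dickson_mul_pr (p : ℕ) [Fact p.Prime] (r m : ℕ) :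
    dickson 1 (1 : ZMod p) (p ^ r * m) = (dickson 1 (1 : ZMod p) m) ^ (p ^ r) := by
  rw [mul_comm, dickson_one_one_mul, dickson_pr, ← expand_eq_comp_X_pow, expand_pow_card]

/-- Let `p > 2` be prime, `k = p^r·k'` with `r ≥ 1` and `gcd(k',p) = 1`. If `k` is even then
`Ψₖ ≡ Ψₖ'^{p^r} (mod p)`; if `k` is odd then `Ψₖ ≡ Ψₖ'^{p^r}·(u+2)^{(p^r-1)/2} (mod p)`,
as polynomials over `𝔽ₚ`. -/
theorem stmt7 (p : ℕ) (hp : p.Prime) (hp2 : 2 < p) (r k' k : ℕ) (hr : 1 ≤ r)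
    (hcop : Nat.Coprime k' p) (hk : k = p ^ r * k')
    (Ψk Ψk' : Polynomial ℤ) :
    (Even k →
      (∀ l : ℂ, l ≠ 0 →
        (Polynomial.aeval (l + l⁻¹)) Ψk = (l ^ k + 1) * l ^ (-((k : ℤ) / 2))) →
      (∀ l : ℂ, l ≠ 0 →
        (Polynomial.aeval (l + l⁻¹)) Ψk' = (l ^ k' + 1) * l ^ (-((k' : ℤ) / 2))) →
      Ψk.map (Int.castRingHom (ZMod p)) =
        (Ψk'.map (Int.castRingHom (ZMod p))) ^ (p ^ r)) ∧
    (Odd k →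
      (∀ l : ℂ, l ≠ 0 →
        (Polynomial.aeval (l + l⁻¹)) Ψk * (l + 1) = (l ^ k + 1) * l ^ ((1 - (k : ℤ)) / 2)) →
      (∀ l : ℂ, l ≠ 0 →
        (Polynomial.aeval (l + l⁻¹)) Ψk' * (l + 1) = (l ^ k' + 1) * l ^ ((1 - (k' : ℤ)) / 2)) →
      Ψk.map (Int.castRingHom (ZMod p)) =
        (Ψk'.map (Int.castRingHom (ZMod p))) ^ (p ^ r) * (X + 2) ^ ((p ^ r - 1) / 2)) := by
  haveI : Fact p.Prime := ⟨hp⟩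
  have hop : Odd (p ^ r) := (hp.odd_of_ne_two (by omega)).pow
  have h2ne : (2 : ZMod p) ≠ 0 := by
    intro h
    have h' : ((2 : ℕ) : ZMod p) = 0 := by exact_mod_cast h
    rw [ZMod.natCast_eq_zero_iff] at h'
    have := Nat.le_of_dvd (by norm_num) h'
    omega
  constructor
  · -- even case
    intro hek h1 h2
    have hek' : Even k' := by
      rw [hk] at hek
      rcases Nat.even_mul.mp hek with h | h
      · exact absurd h (Nat.not_even_iff_odd.mpr hop)
      · exact h
    obtain ⟨m, hm⟩ := hek'
    have e1 : Ψk = dickson 1 1 (k / 2) :=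
      psi_even k (by rw [hk, hm]; exact ⟨p ^ r * m, by ring⟩) Ψk h1
    have e2 : Ψk' = dickson 1 1 (k' / 2) := psi_even k' ⟨m, hm⟩ Ψk' h2
    have hk2 : k / 2 = p ^ r * m := by
      have : k = 2 * (p ^ r * m) := by rw [hk, hm]; ring
      omega
    have hk'2 : k' / 2 = m := by omega
    rw [e1, e2, map_dickson, map_dickson, map_one, hk2, hk'2, dickson_mul_pr]
  · -- odd case
    intro hok h1 h2
    have hok' : Odd k' := ((Nat.odd_mul).mp (hk ▸ hok)).2
    have H1 := psi_odd_sq k hok Ψk h1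
    have H2 := psi_odd_sq k' hok' Ψk' h2
    have ev1 : Ψk.eval 2 = 1 := psi_eval_two k Ψk h1
    have ev2 : Ψk'.eval 2 = 1 := psi_eval_two k' Ψk' h2
    set φ := Int.castRingHom (ZMod p) with hφ
    set A := Ψk.map φ with hA
    set B := Ψk'.map φ with hB
    set q := p ^ r with hq
    set M := (q - 1) / 2 with hMdef
    show A = B ^ q * (X + 2) ^ M
    have hqM : q = 2 * M + 1 := by
      obtain ⟨c, hc⟩ := hop
      omega
    have hmapA : A ^ 2 * (X + 2) = dickson 1 (1 : ZMod p) k + 2 := by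
      have := congrArg (Polynomial.map φ) H1
      simpa [Polynomial.map_pow, Polynomial.map_mul, Polynomial.map_add, map_dickson,
        Polynomial.map_ofNat] using this
    have hmapB : B ^ 2 * (X + 2) = dickson 1 (1 : ZMod p) k' + 2 := by
      have := congrArg (Polynomial.map φ) H2
      simpa [Polynomial.map_pow, Polynomial.map_mul, Polynomial.map_add, map_dickson,
        Polynomial.map_ofNat] using this
    have hdick : dickson 1 (1 : ZMod p) k = (dickson 1 (1 : ZMod p) k') ^ q := by
      rw [hk]; exact dickson_mul_pr p r k'
    have hfrob : (dickson 1 (1 : ZMod p) k' + 2) ^ q =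
        (dickson 1 (1 : ZMod p) k') ^ q + 2 := by
      rw [hq, ← expand_pow_card p r, map_add, map_ofNat, expand_pow_card]
    have hCeq : (B ^ q * (X + 2) ^ M) ^ 2 * (X + 2) = A ^ 2 * (X + 2) := by
      have hCsq : (B ^ q * (X + 2) ^ M) ^ 2 * (X + 2) = (B ^ 2 * (X + 2)) ^ q := by
        calc (B ^ q * (X + 2) ^ M) ^ 2 * (X + 2)
            = (B ^ q) ^ 2 * (((X + 2) ^ M) ^ 2 * (X + 2)) := by ring
          _ = B ^ (2 * q) * (X + 2) ^ (M * 2 + 1) := by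
              rw [← pow_mul, ← pow_mul, ← pow_succ, mul_comm q 2]
          _ = (B ^ 2) ^ q * (X + 2) ^ q := by
              rw [pow_mul, show M * 2 + 1 = q from by rw [hqM]; ring]
          _ = (B ^ 2 * (X + 2)) ^ q := (mul_pow _ _ _).symm
      rw [hCsq, hmapB, hfrob, ← hdick, ← hmapA]
    have hX2 : (X + 2 : Polynomial (ZMod p)) ≠ 0 := by
      intro h
      have := congrArg (Polynomial.eval 0) h
      simp at this
      exact h2ne this
    have hsq : (B ^ q * (X + 2) ^ M) ^ 2 = A ^ 2 := mul_right_cancel₀ hX2 hCeq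
    have hcases : (A - B ^ q * (X + 2) ^ M) * (A + B ^ q * (X + 2) ^ M) = 0 := by
      linear_combination -hsq
    have evalA : A.eval 2 = 1 := by
      rw [hA, show ((2 : ZMod p)) = ((2 : ℕ) : ZMod p) by norm_num, Polynomial.eval_map,
        eval₂_at_natCast, show ((2 : ℕ) : ℤ) = 2 by norm_num, ev1, map_one]
    have evalB : B.eval 2 = 1 := by
      rw [hB, show ((2 : ZMod p)) = ((2 : ℕ) : ZMod p) by norm_num, Polynomial.eval_map,
        eval₂_at_natCast, show ((2 : ℕ) : ℤ) = 2 by norm_num, ev2, map_one]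
    have h2q : (2 : ZMod p) ^ (q - 1) = 1 := by
      have hdvd : (p - 1) ∣ (q - 1) := by
        rw [hq]
        simpa using Nat.sub_dvd_pow_sub_pow p 1 r
      obtain ⟨c, hc⟩ := hdvd
      rw [hc, pow_mul, ZMod.pow_card_sub_one_eq_one h2ne, one_pow]
    have evalC : (B ^ q * (X + 2) ^ M).eval 2 = 1 := by
      have hev : (X + 2 : Polynomial (ZMod p)).eval 2 = 2 ^ 2 := by
        simp
        norm_num
      rw [Polynomial.eval_mul, Polynomial.eval_pow, Polynomial.eval_pow, evalB, one_pow,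
        hev, one_mul, ← pow_mul, show 2 * M = q - 1 by omega, h2q]
    rcases mul_eq_zero.mp hcases with h | h
    · exact sub_eq_zero.mp h
    · exfalso
      have hA2 : A = -(B ^ q * (X + 2) ^ M) := by linear_combination h
      have := congrArg (Polynomial.eval 2) hA2
      rw [evalA, Polynomial.eval_neg, evalC] at this
      exact h2ne (by linear_combination this)
end

section
/- The polynomial P(t,x) = x² + (1 - t²)x + t² - 1 is irreducible in 𝔽[t,x] for every algebraically closed field 𝔽 of characteristic ≠ 2 (including ℂ). -/
open Polynomial

lemma aux1 (𝔽 : Type*) [Field 𝔽] (h2 : (2:𝔽) ≠ 0) :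
    Irreducible (X ^ 2 + C (1 - (X:𝔽[X]) ^ 2) * X + C ((X:𝔽[X]) ^ 2 - 1) : (𝔽[X])[X]) := by
  have hmonic : (X ^ 2 + C (1 - (X:𝔽[X]) ^ 2) * X + C ((X:𝔽[X]) ^ 2 - 1) : (𝔽[X])[X]).Monic := by
    rw [show (X ^ 2 + C (1 - (X:𝔽[X]) ^ 2) * X + C ((X:𝔽[X]) ^ 2 - 1) : (𝔽[X])[X])
        = X ^ 2 + (C (1 - (X:𝔽[X]) ^ 2) * X + C ((X:𝔽[X]) ^ 2 - 1)) from by ring]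
    exact monic_X_pow_add (lt_of_le_of_lt degree_linear_le (by norm_num))
  have hnd : (X ^ 2 + C (1 - (X:𝔽[X]) ^ 2) * X + C ((X:𝔽[X]) ^ 2 - 1) : (𝔽[X])[X]).natDegree = 2 := by
    rw [show (X ^ 2 + C (1 - (X:𝔽[X]) ^ 2) * X + C ((X:𝔽[X]) ^ 2 - 1) : (𝔽[X])[X])
        = C 1 * X ^ 2 + C (1 - (X:𝔽[X]) ^ 2) * X + C ((X:𝔽[X]) ^ 2 - 1) from by rw [map_one, one_mul]]
    exact natDegree_quadratic one_ne_zero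
  by_contra h
  obtain ⟨c₁, c₂, hmul, hadd⟩ := (hmonic.not_irreducible_iff_exists_add_mul_eq_coeff hnd).mp h
  simp only [coeff_add, coeff_X_pow, coeff_C_mul, coeff_X_zero, coeff_X_one, coeff_C] at hmul hadd
  norm_num at hmul hadd
  -- hmul : X^2 - 1 = c₁ * c₂,  hadd : 1 - X^2 = c₁ + c₂
  have key : (c₁ - c₂) ^ 2 = ((X:𝔽[X]) - 1) * (((X:𝔽[X]) + 1) * ((X:𝔽[X]) ^ 2 - 5)) := by
    have e1 : (c₁ - c₂) ^ 2 = (c₁ + c₂) ^ 2 - 4 * (c₁ * c₂) := by ring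
    rw [e1, ← hadd, ← hmul]; ring
  have hp : Prime ((X:𝔽[X]) - 1) := by
    simpa using prime_X_sub_C (1:𝔽)
  obtain ⟨v, hv⟩ : ((X:𝔽[X]) - 1) ∣ (c₁ - c₂) :=
    hp.dvd_of_dvd_pow (n := 2) ⟨_, key⟩
  have hne : ((X:𝔽[X]) - 1) ≠ 0 := by
    simpa using X_sub_C_ne_zero (1:𝔽)
  have h3 : ((X:𝔽[X]) - 1) * v ^ 2 = ((X:𝔽[X]) + 1) * ((X:𝔽[X]) ^ 2 - 5) := by
    apply mul_left_cancel₀ hne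
    rw [← key, hv]; ring
  have h4 := congrArg (eval (1:𝔽)) h3
  simp [eval_mul, eval_pow, eval_sub, eval_add, eval_one] at h4
  -- h4 : 0 = 2 * (1 - 5) or similar
  rcases h4 with h4 | h4
  · exact h2 (by linear_combination h4)
  · have h4' : (2:𝔽) * 2 = 0 := by linear_combination -h4
    exact h2 (mul_self_eq_zero.mp h4')


/-- The polynomial `P(t,x) = x² + (1-t²)x + t² - 1` (with `t = X 0`, `x = X 1`) is
irreducible in `𝔽[t,x]` for every algebraically closed field `𝔽` of characteristic `≠ 2`
(in particular for `ℂ`). -/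
theorem stmt12 (𝔽 : Type*) [Field 𝔽] [IsAlgClosed 𝔽] (h2 : ringChar 𝔽 ≠ 2) :
    Irreducible
      ((MvPolynomial.X 1) ^ 2 + (1 - (MvPolynomial.X 0) ^ 2) * MvPolynomial.X 1 +
        (MvPolynomial.X 0) ^ 2 - 1 : MvPolynomial (Fin 2) 𝔽) := by
  have h2' : (2:𝔽) ≠ 0 := Ring.two_ne_zero h2
  let E : MvPolynomial (Fin 2) 𝔽 ≃ₐ[𝔽] (𝔽[X])[X] :=
    ((MvPolynomial.renameEquiv 𝔽 (Equiv.swap (0:Fin 2) 1)).trans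
      (MvPolynomial.finSuccEquiv 𝔽 1)).trans
      (Polynomial.mapAlgEquiv ((MvPolynomial.finSuccEquiv 𝔽 0).trans
        (Polynomial.mapAlgEquiv (MvPolynomial.isEmptyAlgEquiv 𝔽 (Fin 0)))))
  have hE1 : E (MvPolynomial.X 1) = (X : (𝔽[X])[X]) := by
    show _ = _
    simp [E, MvPolynomial.renameEquiv_apply, MvPolynomial.rename_X,
      Equiv.swap_apply_right, MvPolynomial.finSuccEquiv_X_zero,
      Polynomial.coe_mapAlgEquiv]
  have hE0 : E (MvPolynomial.X 0) = (C (X:𝔽[X]) : (𝔽[X])[X]) := by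
    show (Polynomial.mapAlgEquiv ((MvPolynomial.finSuccEquiv 𝔽 0).trans
        (Polynomial.mapAlgEquiv (MvPolynomial.isEmptyAlgEquiv 𝔽 (Fin 0)))))
        ((MvPolynomial.finSuccEquiv 𝔽 1)
          ((MvPolynomial.renameEquiv 𝔽 (Equiv.swap (0:Fin 2) 1)) (MvPolynomial.X 0))) = _
    rw [MvPolynomial.renameEquiv_apply, MvPolynomial.rename_X, Equiv.swap_apply_left,
      ← Fin.succ_zero_eq_one, MvPolynomial.finSuccEquiv_X_succ]
    simp [Polynomial.coe_mapAlgEquiv, MvPolynomial.finSuccEquiv_X_zero]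
  rw [← MulEquiv.irreducible_iff (E : MvPolynomial (Fin 2) 𝔽 ≃* (𝔽[X])[X])]
  have : E ((MvPolynomial.X 1) ^ 2 + (1 - (MvPolynomial.X 0) ^ 2) * MvPolynomial.X 1 +
        (MvPolynomial.X 0) ^ 2 - 1)
      = (X ^ 2 + C (1 - (X:𝔽[X]) ^ 2) * X + C ((X:𝔽[X]) ^ 2 - 1) : (𝔽[X])[X]) := by
    simp only [map_add, map_sub, map_mul, map_pow, map_one, hE0, hE1]
    ring
  show Irreducible (E _)
  rw [this]
  exact aux1 𝔽 h2'
end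

section
/- Let α be an odd positive integer, p an odd prime dividing α, and write α = p^r·α' with gcd(α', p) = 1. Then Φ_α(x) ≡ (x-2)^{(p^r - 1)/2} · Φ_{α'}(x)^{p^r} mod p, where Φ_α ∈ ℤ[x] satisfies Φ_α(λ + 1/λ) = (λ^α - 1)/(λ - 1)·λ^{(1-α)/2}. -/
open Polynomial

/-!
Writing `x = λ + λ⁻¹`, the defining identity reads `Φ_m(x) (λ - 1) λ^((m-1)/2) = λ^m - 1`.
Clearing denominators turns it into an identity in `ℤ[X]`, so it holds over every field, in
particular over an algebraic closure of `𝔽_p`. There `λ^α - 1 = (λ^α' - 1)^(p^r)` by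
Frobenius, and `(x - 2) λ = (λ - 1)^2` absorbs the surplus factor `(λ - 1)^(p^r - 1)`. Every
`x ≠ 2` is of the form `λ + λ⁻¹` with `λ ≠ 0, 1`, so both sides agree at infinitely many
points.
-/

namespace Polynomial

/-- `X ^ n * P (X + X⁻¹)`, a polynomial as soon as `P.natDegree ≤ n`. -/
noncomputable def joukowskiNumerator {R : Type*} [CommRing R] (n : ℕ) (P : R[X]) : R[X] :=
  ∑ i ∈ Finset.range (n + 1), C (P.coeff i) * (X ^ 2 + 1) ^ i * X ^ (n - i)

theorem map_joukowskiNumerator {R S : Type*} [CommRing R] [CommRing S] (f : R →+* S) (n : ℕ)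
    (P : R[X]) : (joukowskiNumerator n P).map f = joukowskiNumerator n (P.map f) := by
  simp [joukowskiNumerator, Polynomial.map_sum]

theorem eval_joukowskiNumerator {K : Type*} [Field K] {n : ℕ} {P : K[X]} (hn : P.natDegree ≤ n)
    {l : K} (hl : l ≠ 0) : (joukowskiNumerator n P).eval l = l ^ n * P.eval (l + l⁻¹) := by
  rw [eval_eq_sum_range' (Nat.lt_succ_of_le hn), joukowskiNumerator, eval_finsetSum,
    Finset.mul_sum]
  refine Finset.sum_congr rfl fun i hi => ?_
  have hin : i ≤ n := Nat.lt_succ_iff.mp (Finset.mem_range.mp hi)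
  have hsum : l + l⁻¹ = (l ^ 2 + 1) / l := by field_simp
  simp only [eval_mul, eval_pow, eval_C, eval_add, eval_X, eval_one, hsum, div_pow]
  rw [← pow_sub_mul_pow l hin]
  field_simp

theorem joukowskiNumerator_mul_eq_of_eval {K : Type*} [Field K] [Infinite K] {P : K[X]}
    {m c : ℕ} (h : ∀ l : K, l ≠ 0 → P.eval (l + l⁻¹) * (l - 1) * l ^ c = l ^ m - 1) :
    joukowskiNumerator P.natDegree P * (X - 1) * X ^ c = (X ^ m - 1) * X ^ P.natDegree := by
  refine eq_of_infinite_eval_eq _ _ ((Set.finite_singleton 0).infinite_compl.mono fun l hl => ?_)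
  simp only [Set.mem_ofPred_eq, eval_mul, eval_pow, eval_sub, eval_X, eval_one,
    eval_joukowskiNumerator le_rfl hl, ← h l hl]
  ring

theorem eval_mul_eq_of_joukowskiNumerator {K : Type*} [Field K] {P : K[X]} {n m c : ℕ}
    (hn : P.natDegree ≤ n) (h : joukowskiNumerator n P * (X - 1) * X ^ c = (X ^ m - 1) * X ^ n)
    {l : K} (hl : l ≠ 0) : P.eval (l + l⁻¹) * (l - 1) * l ^ c = l ^ m - 1 := by
  have hl' := congrArg (eval l) h
  simp only [eval_mul, eval_pow, eval_sub, eval_X, eval_one, eval_joukowskiNumerator hn hl] at hl'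
  refine mul_right_cancel₀ (pow_ne_zero n hl) ?_
  rw [← hl']
  ring

theorem eq_of_eval_add_inv_eq {K : Type*} [Field K] [IsAlgClosed K] {P Q : K[X]}
    (h : ∀ l : K, l ≠ 0 → l ≠ 1 → P.eval (l + l⁻¹) = Q.eval (l + l⁻¹)) : P = Q := by
  refine eq_of_infinite_eval_eq _ _ ((Set.finite_singleton 2).infinite_compl.mono fun x hx => ?_)
  obtain ⟨l, hl⟩ := IsAlgClosed.exists_root (C 1 * X ^ 2 + C (-x) * X + C 1)
    (by rw [degree_quadratic one_ne_zero]; decide)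
  simp only [IsRoot, eval_add, eval_mul, eval_C, eval_pow, eval_X] at hl
  have hl0 : l ≠ 0 := by rintro rfl; simp at hl
  have hx' : x = l + l⁻¹ := by field_simp; linear_combination -hl
  have hl1 : l ≠ 1 := by rintro rfl; norm_num at hx'; exact hx hx'
  rw [Set.mem_ofPred_eq, hx']
  exact h l hl0 hl1

end Polynomial

theorem eval_add_inv_of_complex {P : ℤ[X]} {m c : ℕ}
    (h : ∀ l : ℂ, l ≠ 0 →
      (P.map (Int.castRingHom ℂ)).eval (l + l⁻¹) * (l - 1) * l ^ c = l ^ m - 1)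
    (K : Type*) [Field K] :
    ∀ l : K, l ≠ 0 →
      (P.map (Int.castRingHom K)).eval (l + l⁻¹) * (l - 1) * l ^ c = l ^ m - 1 := by
  have hℤ : joukowskiNumerator P.natDegree P * (X - 1) * X ^ c =
      (X ^ m - 1) * X ^ P.natDegree := by
    apply map_injective (Int.castRingHom ℂ) Int.cast_injective
    have := joukowskiNumerator_mul_eq_of_eval h
    rw [natDegree_map_eq_of_injective Int.cast_injective] at this
    simpa [map_joukowskiNumerator] using this
  refine fun l hl => eval_mul_eq_of_joukowskiNumerator natDegree_map_le ?_ hl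
  simpa [map_joukowskiNumerator] using congrArg (map (Int.castRingHom K)) hℤ

theorem eval_add_inv_of_phi {c : ℕ} {P : ℤ[X]}
    (hP : ∀ l : ℂ, l ≠ 0 → aeval (l + l⁻¹) P * (l - 1) =
      (l ^ (2 * c + 1) - 1) * l ^ ((1 - ((2 * c + 1 : ℕ) : ℤ)) / 2))
    (K : Type*) [Field K] : ∀ l : K, l ≠ 0 →
      (P.map (Int.castRingHom K)).eval (l + l⁻¹) * (l - 1) * l ^ c = l ^ (2 * c + 1) - 1 := by
  refine eval_add_inv_of_complex (fun z hz => ?_) K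
  have hexp : (1 - ((2 * c + 1 : ℕ) : ℤ)) / 2 = -(c : ℤ) := by omega
  rw [← algebraMap_int_eq, eval_map_algebraMap, hP z hz, hexp, zpow_neg, zpow_natCast, mul_assoc,
    inv_mul_cancel₀ (pow_ne_zero c hz), mul_one]

theorem eval_add_inv_eq_of_frobenius {K : Type*} [Field K] (p : ℕ) [ExpChar K p]
    {r k c : ℕ} (hk : p ^ r = 2 * k + 1) {Q Q' : K[X]}
    (hQ : ∀ l : K, l ≠ 0 →
      Q.eval (l + l⁻¹) * (l - 1) * l ^ (p ^ r * c + k) = l ^ (2 * (p ^ r * c + k) + 1) - 1)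
    (hQ' : ∀ l : K, l ≠ 0 → Q'.eval (l + l⁻¹) * (l - 1) * l ^ c = l ^ (2 * c + 1) - 1)
    {l : K} (hl0 : l ≠ 0) (hl1 : l ≠ 1) :
    Q.eval (l + l⁻¹) = (l + l⁻¹ - 2) ^ k * Q'.eval (l + l⁻¹) ^ p ^ r := by
  have hfrob : l ^ (2 * (p ^ r * c + k) + 1) - 1 = (l ^ (2 * c + 1) - 1) ^ p ^ r := by
    rw [sub_pow_expChar_pow, one_pow, ← pow_mul, hk]
    ring_nf
  have hsq : (l + l⁻¹ - 2) * l = (l - 1) ^ 2 := by field_simp; ring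
  have hpow : (l - 1) ^ p ^ r = (l + l⁻¹ - 2) ^ k * l ^ k * (l - 1) := by
    rw [hk, pow_succ, pow_mul, ← hsq, mul_pow]
  refine mul_right_cancel₀
    (mul_ne_zero (sub_ne_zero.mpr hl1) (pow_ne_zero (p ^ r * c + k) hl0)) ?_
  calc Q.eval (l + l⁻¹) * ((l - 1) * l ^ (p ^ r * c + k))
      = l ^ (2 * (p ^ r * c + k) + 1) - 1 := by rw [← hQ l hl0, mul_assoc]
    _ = (Q'.eval (l + l⁻¹) * (l - 1) * l ^ c) ^ p ^ r := by rw [hfrob, hQ' l hl0]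
    _ = Q'.eval (l + l⁻¹) ^ p ^ r * (l - 1) ^ p ^ r * l ^ (p ^ r * c) := by
        rw [mul_pow, mul_pow, ← pow_mul, mul_comm c]
    _ = (l + l⁻¹ - 2) ^ k * Q'.eval (l + l⁻¹) ^ p ^ r * ((l - 1) * l ^ (p ^ r * c + k)) := by
        rw [hpow]; ring

theorem stmt13_general (α : ℕ) (hαodd : Odd α)
    (p : ℕ) (hp : p.Prime) (hpodd : p ≠ 2)
    (r α' : ℕ) (hfact : α = p ^ r * α')
    (Φα Φα' : Polynomial ℤ)
    (hΦα : ∀ l : ℂ, l ≠ 0 →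
      (Polynomial.aeval (l + l⁻¹)) Φα * (l - 1) = (l ^ α - 1) * l ^ ((1 - (α : ℤ)) / 2))
    (hΦα' : ∀ l : ℂ, l ≠ 0 →
      (Polynomial.aeval (l + l⁻¹)) Φα' * (l - 1) = (l ^ α' - 1) * l ^ ((1 - (α' : ℤ)) / 2)) :
    Φα.map (Int.castRingHom (ZMod p)) =
      (X - 2) ^ ((p ^ r - 1) / 2) * (Φα'.map (Int.castRingHom (ZMod p))) ^ (p ^ r) := by
  have : Fact p.Prime := ⟨hp⟩
  obtain ⟨k, hk⟩ : Odd (p ^ r) := (hp.odd_of_ne_two hpodd).pow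
  obtain ⟨a, rfl⟩ := hαodd
  obtain ⟨c, rfl⟩ : Odd α' := (Nat.odd_mul.mp (hfact ▸ odd_two_mul_add_one a)).2
  obtain rfl : a = p ^ r * c + k := by rw [hk] at hfact ⊢; linarith
  rw [show (p ^ r - 1) / 2 = k by omega]
  let K := AlgebraicClosure (ZMod p)
  have hcomp : (algebraMap (ZMod p) K).comp (Int.castRingHom (ZMod p)) = Int.castRingHom K :=
    RingHom.ext_int _ _
  apply map_injective (algebraMap (ZMod p) K) (algebraMap (ZMod p) K).injective
  refine eq_of_eval_add_inv_eq fun l hl0 hl1 => ?_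
  simp only [Polynomial.map_mul, Polynomial.map_pow, Polynomial.map_sub, map_X,
    Polynomial.map_ofNat, map_map, hcomp, eval_mul, eval_pow, eval_sub, eval_X, eval_ofNat]
  exact eval_add_inv_eq_of_frobenius p hk (eval_add_inv_of_phi hΦα K)
    (eval_add_inv_of_phi hΦα' K) hl0 hl1

/-- Let `α` be odd and positive, `p` an odd prime dividing `α`, `α = p^r·α'` with
`gcd(α',p) = 1` and `r ≥ 1`. Then `Φ_α(x) ≡ (x-2)^{(p^r-1)/2}·Φ_{α'}(x)^{p^r} (mod p)`,
where `Φ_m ∈ ℤ[x]` satisfies `Φ_m(λ+λ⁻¹)(λ-1) = (λ^m-1)·λ^{(1-m)/2}` for nonzero `λ ∈ ℂ`. -/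
theorem stmt13 (α : ℕ) (hα : 0 < α) (hαodd : Odd α)
    (p : ℕ) (hp : p.Prime) (hpodd : p ≠ 2) (hpdvd : p ∣ α)
    (r α' : ℕ) (hr : 1 ≤ r) (hcop : Nat.Coprime α' p) (hfact : α = p ^ r * α')
    (Φα Φα' : Polynomial ℤ)
    (hΦα : ∀ l : ℂ, l ≠ 0 →
      (Polynomial.aeval (l + l⁻¹)) Φα * (l - 1) = (l ^ α - 1) * l ^ ((1 - (α : ℤ)) / 2))
    (hΦα' : ∀ l : ℂ, l ≠ 0 →
      (Polynomial.aeval (l + l⁻¹)) Φα' * (l - 1) = (l ^ α' - 1) * l ^ ((1 - (α' : ℤ)) / 2)) :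
    Φα.map (Int.castRingHom (ZMod p)) =
      (X - 2) ^ ((p ^ r - 1) / 2) * (Φα'.map (Int.castRingHom (ZMod p))) ^ (p ^ r) :=
  stmt13_general α hαodd p hp hpodd r α' hfact Φα Φα' hΦα hΦα'
end
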